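/- Let C be a convex body in ℝ² and let D be a convex polygon (the convex hull of a finite point set, with nonempty interior) that is parallel to C: for every nonzero direction u ∈ ℝ², if the exposed face F(D,u) = {x ∈ D : ⟪x,u⟫ = sup_{y∈D} ⟪y,u⟫} contains more than one point, then the exposed face F(C,u) of C also contains more than one point. Then there exists a constant ρ > 0 (depending on C and D) such that for every n and every packing C₁,…,Cₙ in D of positive homothets of C (Cᵢ = vᵢ + μᵢ • C, μᵢ > 0) in which every Cᵢ intersects the frontier of D, one has ∑ᵢ μᵢ ≤ ρ. (Proposition 3: when D is parallel to C, the total perimeter of a boundary-touching packing is bounded independently of n.) -/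

import Mathlib

open MeasureTheory Metric Set

/-- The exposed face of `K` in direction `u`: the set of points of `K` maximizing the
inner product with `u`. -/
def expFace (K : Set (EuclideanSpace ℝ (Fin 2))) (u : EuclideanSpace ℝ (Fin 2)) :
    Set (EuclideanSpace ℝ (Fin 2)) :=
  {x ∈ K | ∀ y ∈ K, (inner ℝ y u : ℝ) ≤ inner ℝ x u}

/-- `K` has a side in direction `u` if the exposed face `F(K,u)` has more than one
point. -/
def HasSide (K : Set (EuclideanSpace ℝ (Fin 2))) (u : EuclideanSpace ℝ (Fin 2)) : Prop :=
  ∃ x ∈ expFace K u, ∃ y ∈ expFace K u, x ≠ y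

/-- `D` is parallel to `C` if whenever `D` has a side in some direction `u ≠ 0`, then `C`
also has a side in direction `u`. -/
def ParallelTo (D C : Set (EuclideanSpace ℝ (Fin 2))) : Prop :=
  ∀ u : EuclideanSpace ℝ (Fin 2), u ≠ 0 → HasSide D u → HasSide C u

/-
Every frontier point of the polygon `D` lies on a side of `D`, an exposed face `F(D, u)`
through two vertices, so the homothets fall into finitely many classes indexed by pairs of
vertices. A homothet `vᵢ + μᵢ • C` touching `F(D, u)` has its own face in direction `u` inside
`F(D, u)`; as `D` is parallel to `C`, that face is a segment of length `μᵢ * ℓ` on the line of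
`F(D, u)`, where `ℓ > 0` is the length of the side of `C` in direction `u`. In the plane, two
homothets lying below this line whose segments share more than a point have intersecting
interiors, so the segments of one class are essentially disjoint subintervals of a line segment
of length at most `2 * diam D`. Hence each class contributes at most `2 * diam D / ℓ`.
-/

open scoped RealInnerProductSpace
open Filter Topology Module

section InnerProductSpace

variable {E : Type*} [NormedAddCommGroup E] [InnerProductSpace ℝ E]

theorem inner_lt_of_mem_interior {K : Set E} {u z : E} {c : ℝ} (hu : u ≠ 0)
    (hK : ∀ x ∈ K, ⟪x, u⟫ ≤ c) (hz : z ∈ interior K) : ⟪z, u⟫ < c := by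
  have hpath : Tendsto (fun t : ℝ => z + t • u) (𝓝[>] 0) (𝓝 z) := by
    have : Continuous fun t : ℝ => z + t • u := by fun_prop
    simpa using (this.tendsto 0).mono_left nhdsWithin_le_nhds
  obtain ⟨t, htK, ht⟩ :=
    ((hpath.eventually (mem_interior_iff_mem_nhds.1 hz)).and self_mem_nhdsWithin).exists
  have := hK _ htK
  rw [inner_add_left, real_inner_smul_left, real_inner_self_eq_norm_sq] at this
  have : 0 < t * ‖u‖ ^ 2 := mul_pos ht (by positivity)
  linarith

theorem exists_inner_le_of_mem_frontier [CompleteSpace E] {K : Set E} (hK : Convex ℝ K)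
    (hint : (interior K).Nonempty) {x : E} (hx : x ∈ frontier K) :
    ∃ u ≠ 0, ∀ y ∈ K, ⟪y, u⟫ ≤ ⟪x, u⟫ := by
  obtain ⟨f, hf⟩ := geometric_hahn_banach_open_point hK.interior isOpen_interior hx.2
  set u := (InnerProductSpace.toDual ℝ E).symm f
  have hu : ∀ y, ⟪y, u⟫ = f y := fun y => by
    rw [real_inner_comm]; exact InnerProductSpace.toDual_symm_apply
  refine ⟨u, ?_, fun y hy => ?_⟩
  · rintro hu0
    obtain ⟨z, hz⟩ := hint
    simpa [← hu, hu0] using hf z hz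
  · have hy' : y ∈ closure (interior K) := by
      rw [hK.closure_interior_eq_closure_of_nonempty_interior hint]; exact subset_closure hy
    rw [hu, hu]
    exact closure_minimal (fun z hz => (hf z hz).le) (isClosed_le f.continuous continuous_const) hy'

theorem sum_le_of_pairwise_subsingleton_inter_Icc {ι : Type*} (s : Finset ι) {a ℓ : ι → ℝ}
    {A B : ℝ} (hAB : A ≤ B) (hℓ : ∀ i ∈ s, 0 ≤ ℓ i)
    (hsub : ∀ i ∈ s, Icc (a i) (a i + ℓ i) ⊆ Icc A B)
    (hpair : (s : Set ι).Pairwise fun i j =>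
      (Icc (a i) (a i + ℓ i) ∩ Icc (a j) (a j + ℓ j)).Subsingleton) :
    ∑ i ∈ s, ℓ i ≤ B - A := by
  have hvol : ENNReal.ofReal (∑ i ∈ s, ℓ i) ≤ ENNReal.ofReal (B - A) := calc
    ENNReal.ofReal (∑ i ∈ s, ℓ i) = ∑ i ∈ s, volume (Icc (a i) (a i + ℓ i)) := by
      rw [ENNReal.ofReal_sum_of_nonneg hℓ]; simp [Real.volume_Icc]
    _ = volume (⋃ i ∈ s, Icc (a i) (a i + ℓ i)) :=
      (measure_biUnion_finset₀ (fun i hi j hj hij => (hpair hi hj hij).measure_zero volume)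
        fun i _ => measurableSet_Icc.nullMeasurableSet).symm
    _ ≤ volume (Icc A B) := measure_mono (iUnion₂_subset hsub)
    _ = ENNReal.ofReal (B - A) := Real.volume_Icc
  exact (ENNReal.ofReal_le_ofReal_iff (by linarith)).1 hvol

variable [Fact (finrank ℝ E = 2)]

theorem exists_eq_smul_of_inner_eq_zero {e v w : E} (he : e ≠ 0) (hv : v ≠ 0)
    (hve : ⟪v, e⟫ = 0) (hwe : ⟪w, e⟫ = 0) : ∃ r : ℝ, w = r • v := by
  obtain ⟨r, hr⟩ := Submodule.mem_span_singleton.1 <|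
    Submodule.mem_span_singleton_of_inner_eq_zero_of_inner_eq_zero he hv
      (by rwa [real_inner_comm]) (by rwa [real_inner_comm])
  exact ⟨r, hr.symm⟩

theorem exists_ne_zero_inner_eq_zero (u : E) : ∃ e ≠ 0, ⟪e, u⟫ = 0 := by
  by_cases hu : u = 0
  · have : Nontrivial E :=
      Module.nontrivial_of_finrank_eq_succ (R := ℝ) (n := 1) (Fact.out : finrank ℝ E = 2)
    obtain ⟨e, he⟩ := exists_ne (0 : E)
    exact ⟨e, he, by simp [hu]⟩
  · have hbot : (ℝ ∙ u)ᗮ ≠ ⊥ := fun h => by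
      have := Submodule.finrank_orthogonal_span_singleton (𝕜 := ℝ) (n := 1) hu
      rw [h, finrank_bot] at this
      exact zero_ne_one this
    obtain ⟨e, he, he0⟩ := Submodule.exists_mem_ne_zero_of_ne_bot hbot
    exact ⟨e, he0, by
      rwa [Submodule.mem_orthogonal_singleton_iff_inner_right, real_inner_comm] at he⟩

theorem eventually_midpoint_sub_smul_mem_interior {K : Set E} (hK : Convex ℝ K) {u p q z : E}
    {c : ℝ} (hu : u ≠ 0) (hKc : ∀ x ∈ K, ⟪x, u⟫ ≤ c) (hp : p ∈ K) (hq : q ∈ K) (hpq : p ≠ q)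
    (hpc : ⟪p, u⟫ = c) (hqc : ⟪q, u⟫ = c) (hz : z ∈ interior K) :
    ∀ᶠ δ in 𝓝[>] (0 : ℝ), midpoint ℝ p q - δ • u ∈ interior K := by
  have hm : midpoint ℝ p q = p + (1 / 2 : ℝ) • (q - p) := by
    rw [midpoint_eq_smul_add, invOf_eq_inv]; module
  have hκ : 0 < (c - ⟪z, u⟫) / ‖u‖ ^ 2 :=
    div_pos (sub_pos.2 (inner_lt_of_mem_interior hu hKc hz)) (by positivity)
  set κ := (c - ⟪z, u⟫) / ‖u‖ ^ 2
  -- in the plane, `z - midpoint ℝ p q` splits along `q - p` and `u`, with `u`-part `-κ • u`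
  obtain ⟨σ, hσ⟩ : ∃ σ : ℝ, z - midpoint ℝ p q + κ • u = σ • (q - p) := by
    refine exists_eq_smul_of_inner_eq_zero hu (sub_ne_zero.2 hpq.symm)
      (by rw [inner_sub_left, hpc, hqc, sub_self]) ?_
    rw [hm, inner_add_left, inner_sub_left, inner_add_left, real_inner_smul_left,
      real_inner_smul_left, inner_sub_left, hpc, hqc, real_inner_self_eq_norm_sq,
      div_mul_cancel₀ _ (by positivity : ‖u‖ ^ 2 ≠ 0)]
    ring
  have hθ : Tendsto (fun δ : ℝ => δ / κ) (𝓝 0) (𝓝 0) := by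
    simpa using (continuous_id.div_const κ).tendsto 0
  have hs : Tendsto (fun δ : ℝ => δ / κ * σ / (1 - δ / κ)) (𝓝 0) (𝓝 0) := by
    simpa [Pi.div_def] using (hθ.mul_const σ).div (tendsto_const_nhds.sub hθ) (by norm_num)
  filter_upwards [self_mem_nhdsWithin,
    nhdsWithin_le_nhds (hθ.eventually (gt_mem_nhds one_pos)),
    nhdsWithin_le_nhds (hs.eventually (Icc_mem_nhds (by norm_num : (-1 / 2 : ℝ) < 0)
      (by norm_num : (0 : ℝ) < 1 / 2)))] with δ hδ hθ1 hs1
  set θ := δ / κ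
  set s := θ * σ / (1 - θ)
  have hθ0 : 0 < θ := div_pos hδ hκ
  have hy : p + (1 / 2 - s) • (q - p) ∈ K :=
    hK.add_smul_sub_mem hp hq ⟨by linarith [hs1.2], by linarith [hs1.1]⟩
  have hcomb : midpoint ℝ p q - δ • u = (1 - θ) • (p + (1 / 2 - s) • (q - p)) + θ • z := by
    have hz' : z = midpoint ℝ p q + σ • (q - p) - κ • u := by rw [← hσ]; abel
    have hsθ : (1 - θ) * s = θ * σ := mul_div_cancel₀ _ (sub_pos.2 hθ1).ne'
    have hδ' : δ = θ * κ := (div_mul_cancel₀ δ hκ.ne').symm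
    rw [hz', hm, hδ']
    match_scalars
    · linear_combination -hsθ
    · linear_combination hsθ
    · ring
  rw [hcomb]
  exact hK.combo_self_interior_mem_interior hy hz (by linarith) hθ0 (by ring)

theorem not_disjoint_interior_of_common_edge {K₁ K₂ : Set E} (hK₁ : Convex ℝ K₁)
    (hK₂ : Convex ℝ K₂) {u p q : E} {c : ℝ} (hu : u ≠ 0) (hK₁c : ∀ x ∈ K₁, ⟪x, u⟫ ≤ c)
    (hK₂c : ∀ x ∈ K₂, ⟪x, u⟫ ≤ c) (hK₁int : (interior K₁).Nonempty)
    (hK₂int : (interior K₂).Nonempty) (hp : p ∈ K₁ ∩ K₂) (hq : q ∈ K₁ ∩ K₂) (hpq : p ≠ q)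
    (hpc : ⟪p, u⟫ = c) (hqc : ⟪q, u⟫ = c) : ¬Disjoint (interior K₁) (interior K₂) := by
  obtain ⟨z₁, hz₁⟩ := hK₁int
  obtain ⟨z₂, hz₂⟩ := hK₂int
  obtain ⟨δ, h₁, h₂⟩ :=
    ((eventually_midpoint_sub_smul_mem_interior hK₁ hu hK₁c hp.1 hq.1 hpq hpc hqc hz₁).and
      (eventually_midpoint_sub_smul_mem_interior hK₂ hu hK₂c hp.2 hq.2 hpq hpc hqc hz₂)).exists
  exact Set.not_disjoint_iff.2 ⟨_, h₁, h₂⟩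

end InnerProductSpace

local notation "ℝ²" => EuclideanSpace ℝ (Fin 2)

instance : Fact (finrank ℝ ℝ² = 2) := ⟨finrank_euclideanSpace_fin⟩

section ExposedFace

variable {K : Set ℝ²} {u x : ℝ²}

theorem inner_eq_of_mem_expFace {y : ℝ²} (hx : x ∈ expFace K u) (hy : y ∈ expFace K u) :
    ⟪x, u⟫ = ⟪y, u⟫ :=
  le_antisymm (hy.2 x hx.1) (hx.2 y hy.1)

theorem expFace_smul_of_pos {r : ℝ} (hr : 0 < r) : expFace K (r • u) = expFace K u := by
  ext x
  simp only [expFace, mem_ofPred_eq, real_inner_smul_right, mul_le_mul_iff_right₀ hr]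

theorem expFace_subset_expFace_of_mem {L : Set ℝ²} (hLK : L ⊆ K) (hxL : x ∈ L)
    (hxK : x ∈ expFace K u) : expFace L u ⊆ expFace K u :=
  fun _ hz => ⟨hLK hz.1, fun y hy => (hxK.2 y hy).trans (hz.2 x hxL)⟩

theorem isExposed_expFace (K : Set ℝ²) (u : ℝ²) : IsExposed ℝ K (expFace K u) := by
  have : expFace K u = (innerSL ℝ u).toExposed K := by
    ext x
    simp [expFace, ContinuousLinearMap.toExposed, real_inner_comm u]
  rw [this]
  exact ContinuousLinearMap.toExposed.isExposed

theorem exists_pos_smul_eq_of_mem_expFace (hint : (interior K).Nonempty) {a b u' : ℝ²}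
    (hab : a ≠ b) (hu : u ≠ 0) (hu' : u' ≠ 0) (ha : a ∈ expFace K u) (hb : b ∈ expFace K u)
    (ha' : a ∈ expFace K u') (hb' : b ∈ expFace K u') : ∃ r : ℝ, 0 < r ∧ u' = r • u := by
  have hperp : ∀ {w}, a ∈ expFace K w → b ∈ expFace K w → ⟪w, b - a⟫ = 0 := fun ha hb => by
    rw [real_inner_comm, inner_sub_left, inner_eq_of_mem_expFace hb ha, sub_self]
  obtain ⟨r, rfl⟩ := exists_eq_smul_of_inner_eq_zero (sub_ne_zero.2 hab.symm) hu
    (hperp ha hb) (hperp ha' hb')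
  obtain ⟨z, hz⟩ := hint
  have h := inner_lt_of_mem_interior hu ha.2 hz
  have h' := inner_lt_of_mem_interior hu' ha'.2 hz
  rw [real_inner_smul_right, real_inner_smul_right] at h'
  exact ⟨r, by nlinarith, rfl⟩

section Polygon

variable {V : Finset ℝ²} {u x : ℝ²}

theorem mem_expFace_convexHull_iff :
    x ∈ expFace (convexHull ℝ ↑V) u ↔ x ∈ convexHull ℝ ↑V ∧ ∀ v ∈ V, ⟪v, u⟫ ≤ ⟪x, u⟫ := by
  refine ⟨fun hx => ⟨hx.1, fun v hv => hx.2 v (subset_convexHull ℝ _ hv)⟩,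
    fun ⟨hx, hV⟩ => ⟨hx, fun y hy => ?_⟩⟩
  exact convexHull_min (t := {y | ⟪y, u⟫ ≤ ⟪x, u⟫}) hV (convex_halfSpace_le
    ⟨fun a b => inner_add_left a b u, fun r a => real_inner_smul_left a u r⟩ _) hy

theorem mem_of_mem_expFace_convexHull (hx : x ∈ expFace (convexHull ℝ ↑V) u)
    (hV : (↑V ∩ expFace (convexHull ℝ ↑V) u).Subsingleton) : x ∈ V := by
  set F := expFace (convexHull ℝ (V : Set ℝ²)) u
  have hF := isExposed_expFace (convexHull ℝ (V : Set ℝ²)) u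
  have hext : F.extremePoints ℝ ⊆ ↑V ∩ F := fun y hy =>
    ⟨extremePoints_convexHull_subset (hF.isExtreme.extremePoints_subset_extremePoints hy), hy.1⟩
  -- Krein–Milman: the face is the closed convex hull of its extreme points, all of them vertices
  have hFV : F ⊆ ↑V ∩ F := calc
    F = closure (convexHull ℝ (F.extremePoints ℝ)) :=
      (closure_convexHull_extremePoints
        (hF.isCompact (V.finite_toSet.isCompact_convexHull (𝕜 := ℝ)))
        (hF.convex (convex_convexHull ℝ _))).symm
    _ ⊆ closure (convexHull ℝ (↑V ∩ F)) := by gcongr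
    _ = ↑V ∩ F := by rw [hV.convex.convexHull_eq, hV.closure_eq]
  exact (hFV hx).1

theorem exists_mem_expFace_convexHull_of_vertex {w : ℝ²} (hw : w ∈ V)
    (hlt : ∀ v ∈ V, v ≠ w → ⟪v, u⟫ < ⟪w, u⟫) (hV : (V.erase w).Nonempty) :
    ∃ v ∈ V, v ≠ w ∧ ∃ u' ≠ 0,
      w ∈ expFace (convexHull ℝ ↑V) u' ∧ v ∈ expFace (convexHull ℝ ↑V) u' := by
  obtain ⟨e, he, heu⟩ := exists_ne_zero_inner_eq_zero u
  -- tilt `u` towards `e` until the supporting line through `w` reaches a second vertex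
  obtain ⟨v₀, hv₀, hmax⟩ :=
    (V.erase w).exists_max_image (fun v => ⟪v - w, e⟫ / (⟪w, u⟫ - ⟪v, u⟫)) hV
  obtain ⟨hv₀w, hv₀V⟩ := Finset.mem_erase.1 hv₀
  set M := ⟪v₀ - w, e⟫ / (⟪w, u⟫ - ⟪v₀, u⟫)
  have htilt : ∀ v, ⟪v, e + M • u⟫ - ⟪w, e + M • u⟫ = ⟪v - w, e⟫ - M * (⟪w, u⟫ - ⟪v, u⟫) := by
    intro v
    simp only [inner_add_right, real_inner_smul_right, inner_sub_left]
    ring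
  have hle : ∀ v ∈ V, ⟪v, e + M • u⟫ ≤ ⟪w, e + M • u⟫ := by
    intro v hv
    rcases eq_or_ne v w with rfl | hvw
    · exact le_rfl
    have := (div_le_iff₀ (sub_pos.2 (hlt v hv hvw))).1 (hmax v (Finset.mem_erase.2 ⟨hvw, hv⟩))
    linarith [htilt v]
  have heq : ⟪v₀, e + M • u⟫ = ⟪w, e + M • u⟫ := by
    have := htilt v₀
    rw [div_mul_cancel₀ _ (sub_pos.2 (hlt v₀ hv₀V hv₀w)).ne', sub_self] at this
    linarith
  refine ⟨v₀, hv₀V, hv₀w, e + M • u, fun h => he ?_, ?_, ?_⟩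
  · have := congrArg (⟪·, e⟫) h
    simpa [inner_add_left, real_inner_smul_left, real_inner_comm e u, heu] using this
  · exact mem_expFace_convexHull_iff.2 ⟨subset_convexHull ℝ _ hw, hle⟩
  · exact mem_expFace_convexHull_iff.2 ⟨subset_convexHull ℝ _ hv₀V, fun v hv => heq ▸ hle v hv⟩

theorem exists_offDiag_mem_expFace_of_mem_frontier
    (hint : (interior (convexHull ℝ (V : Set ℝ²))).Nonempty)
    (hx : x ∈ frontier (convexHull ℝ (V : Set ℝ²))) :
    ∃ p ∈ V.offDiag, ∃ u ≠ 0, x ∈ expFace (convexHull ℝ ↑V) u ∧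
      p.1 ∈ expFace (convexHull ℝ ↑V) u ∧ p.2 ∈ expFace (convexHull ℝ ↑V) u := by
  set D := convexHull ℝ (V : Set ℝ²)
  have hxD : x ∈ D := (V.finite_toSet.isCompact_convexHull (𝕜 := ℝ)).isClosed.frontier_subset hx
  obtain ⟨u, hu, hxu⟩ := exists_inner_le_of_mem_frontier (convex_convexHull ℝ _) hint hx
  have hxF : x ∈ expFace D u := ⟨hxD, hxu⟩
  by_cases hV : ((V : Set ℝ²) ∩ expFace D u).Subsingleton
  · have hxV : x ∈ V := mem_of_mem_expFace_convexHull hxF hV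
    have hlt : ∀ v ∈ V, v ≠ x → ⟪v, u⟫ < ⟪x, u⟫ := fun v hv hvx =>
      (hxu v (subset_convexHull ℝ _ hv)).lt_of_ne fun h => hvx <|
        hV ⟨hv, subset_convexHull ℝ _ hv, fun y hy => (hxu y hy).trans_eq h.symm⟩ ⟨hxV, hxF⟩
    have hne : (V.erase x).Nonempty := by
      rw [Finset.nonempty_iff_ne_empty]
      intro h
      have hDx : D ⊆ {x} := convexHull_min (fun v hv => by_contra fun hvx => by
        simpa [h] using Finset.mem_erase.2 ⟨hvx, hv⟩) (convex_singleton x)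
      obtain ⟨z, hz⟩ := hint
      simpa using interior_mono hDx hz
    obtain ⟨v, hv, hvx, u', hu', hxF', hvF'⟩ := exists_mem_expFace_convexHull_of_vertex hxV hlt hne
    exact ⟨(x, v), Finset.mem_offDiag.2 ⟨hxV, hv, hvx.symm⟩, u', hu', hxF', hxF', hvF'⟩
  · obtain ⟨a, ⟨ha, haF⟩, b, ⟨hb, hbF⟩, hab⟩ := Set.not_subsingleton_iff.1 hV
    exact ⟨(a, b), Finset.mem_offDiag.2 ⟨ha, hb, hab⟩, u, hu, hxF, haF, hbF⟩

end Polygon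

section Homothet

variable {C : Set ℝ²} {v X Y u : ℝ²} {μ : ℝ}

theorem mem_expFace_homothet (hμ : 0 < μ) (hX : X ∈ expFace C u) :
    v + μ • X ∈ expFace ((fun x => v + μ • x) '' C) u := by
  refine ⟨⟨X, hX.1, rfl⟩, ?_⟩
  rintro _ ⟨y, hy, rfl⟩
  simp only [inner_add_left, real_inner_smul_left]
  gcongr
  exact hX.2 y hy

theorem mem_homothet_of_mem_Icc (hC : Convex ℝ C) (hX : X ∈ C) (hY : Y ∈ C) (hμ : 0 < μ)
    {P₀ : ℝ²} {a t : ℝ} (ha : v + μ • X = P₀ + a • (Y - X)) (ht : t ∈ Icc a (a + μ)) :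
    P₀ + t • (Y - X) ∈ (fun x => v + μ • x) '' C := by
  refine ⟨X + ((t - a) / μ) • (Y - X), hC.add_smul_sub_mem hX hY
    ⟨div_nonneg (by linarith [ht.1]) hμ.le, div_le_one_of_le₀ (by linarith [ht.2]) hμ.le⟩, ?_⟩
  simp only [smul_add, smul_smul, mul_div_cancel₀ _ hμ.ne', ← add_assoc, ha, sub_smul]
  abel

theorem interior_homothet_nonempty (hμ : μ ≠ 0) (hC : (interior C).Nonempty) :
    (interior ((fun x => v + μ • x) '' C)).Nonempty := by
  obtain ⟨z, hz⟩ := hC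
  exact ⟨_, ((isOpenMap_add_left v).comp (isOpenMap_smul₀ hμ)).image_interior_subset C
    ⟨z, hz, rfl⟩⟩

theorem subsingleton_Icc_inter_of_disjoint_interior (hC : Convex ℝ C)
    (hCint : (interior C).Nonempty) (hu : u ≠ 0) (hX : X ∈ expFace C u) (hY : Y ∈ expFace C u)
    (hXY : X ≠ Y) {P₀ v₁ v₂ : ℝ²} {μ₁ μ₂ a₁ a₂ : ℝ} (hμ₁ : 0 < μ₁) (hμ₂ : 0 < μ₂)
    (ha₁ : v₁ + μ₁ • X = P₀ + a₁ • (Y - X)) (ha₂ : v₂ + μ₂ • X = P₀ + a₂ • (Y - X))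
    (hdisj : Disjoint (interior ((fun x => v₁ + μ₁ • x) '' C))
      (interior ((fun x => v₂ + μ₂ • x) '' C))) :
    (Icc a₁ (a₁ + μ₁) ∩ Icc a₂ (a₂ + μ₂)).Subsingleton := by
  intro t₁ ht₁ t₂ ht₂
  by_contra hne
  have hline : ∀ t : ℝ, ⟪P₀ + t • (Y - X), u⟫ = ⟪P₀, u⟫ := fun t => by
    rw [inner_add_left, real_inner_smul_left, inner_sub_left, inner_eq_of_mem_expFace hY hX,
      sub_self, mul_zero, add_zero]
  have hhalf : ∀ {v : ℝ²} {μ a : ℝ}, 0 < μ → v + μ • X = P₀ + a • (Y - X) →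
      ∀ x ∈ (fun x => v + μ • x) '' C, ⟪x, u⟫ ≤ ⟪P₀, u⟫ := fun hμ ha x hx =>
    ((mem_expFace_homothet hμ hX).2 x hx).trans_eq (by rw [ha, hline])
  have hinj : P₀ + t₁ • (Y - X) ≠ P₀ + t₂ • (Y - X) := fun h =>
    hne (smul_left_injective ℝ (sub_ne_zero.2 hXY.symm) (add_left_cancel h))
  exact not_disjoint_interior_of_common_edge (hC.affinity _ _) (hC.affinity _ _) hu
    (hhalf hμ₁ ha₁) (hhalf hμ₂ ha₂) (interior_homothet_nonempty hμ₁.ne' hCint)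
    (interior_homothet_nonempty hμ₂.ne' hCint)
    ⟨mem_homothet_of_mem_Icc hC hX.1 hY.1 hμ₁ ha₁ ht₁.1,
      mem_homothet_of_mem_Icc hC hX.1 hY.1 hμ₂ ha₂ ht₁.2⟩
    ⟨mem_homothet_of_mem_Icc hC hX.1 hY.1 hμ₁ ha₁ ht₂.1,
      mem_homothet_of_mem_Icc hC hX.1 hY.1 hμ₂ ha₂ ht₂.2⟩
    hinj (hline t₁) (hline t₂) hdisj

theorem sum_le_of_expFace_subset {K : Set ℝ²} (hK : Bornology.IsBounded K) (hC : Convex ℝ C)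
    (hCint : (interior C).Nonempty) (hu : u ≠ 0) (hX : X ∈ expFace C u) (hY : Y ∈ expFace C u)
    (hXY : X ≠ Y) {ι : Type*} (s : Finset ι) (v : ι → ℝ²) (μ : ι → ℝ)
    (hμ : ∀ i ∈ s, 0 < μ i)
    (hdisj : (s : Set ι).Pairwise fun i j => Disjoint (interior ((fun x => v i + μ i • x) '' C))
      (interior ((fun x => v j + μ j • x) '' C)))
    (hface : ∀ i ∈ s, expFace ((fun x => v i + μ i • x) '' C) u ⊆ expFace K u) :
    ∑ i ∈ s, μ i ≤ 2 * diam K / dist X Y := by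
  rcases s.eq_empty_or_nonempty with rfl | ⟨i₀, hi₀⟩
  · simp only [Finset.sum_empty]; positivity
  have hw : Y - X ≠ 0 := sub_ne_zero.2 hXY.symm
  have hP : ∀ i ∈ s, v i + μ i • X ∈ expFace K u := fun i hi =>
    hface i hi (mem_expFace_homothet (hμ i hi) hX)
  set P₀ := v i₀ + μ i₀ • X
  -- the homothets meet the line of the side `expFace K u` in the segments
  -- `P₀ + [a i, a i + μ i] • (Y - X)`
  have hcoord : ∀ i ∈ s, ∃ a : ℝ, v i + μ i • X = P₀ + a • (Y - X) := fun i hi => by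
    obtain ⟨a, ha⟩ := exists_eq_smul_of_inner_eq_zero (w := v i + μ i • X - P₀) hu hw
      (by rw [inner_sub_left, inner_eq_of_mem_expFace hY hX, sub_self])
      (by rw [inner_sub_left, inner_eq_of_mem_expFace (hP i hi) (hP i₀ hi₀), sub_self])
    exact ⟨a, by rw [← ha]; abel⟩
  choose! a ha using hcoord
  set L := diam K / ‖Y - X‖
  have hbound : ∀ t : ℝ, P₀ + t • (Y - X) ∈ K → |t| ≤ L := fun t ht => by
    rw [le_div_iff₀ (norm_pos_iff.2 hw)]
    calc |t| * ‖Y - X‖ = dist (P₀ + t • (Y - X)) P₀ := by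
          rw [dist_eq_norm, add_sub_cancel_left, norm_smul, Real.norm_eq_abs]
      _ ≤ diam K := dist_le_diam_of_mem hK ht (hP i₀ hi₀).1
  have hIcc : ∀ i ∈ s, Icc (a i) (a i + μ i) ⊆ Icc (-L) L := fun i hi => by
    have hQ := (hface i hi (mem_expFace_homothet (hμ i hi) hY)).1
    rw [show v i + μ i • Y = P₀ + (a i + μ i) • (Y - X) by
      rw [add_smul, ← add_assoc, ← ha i hi, smul_sub]; abel] at hQ
    exact Icc_subset_Icc (neg_le_of_abs_le (hbound _ (ha i hi ▸ (hP i hi).1)))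
      (le_of_abs_le (hbound _ hQ))
  calc ∑ i ∈ s, μ i ≤ L - -L :=
        sum_le_of_pairwise_subsingleton_inter_Icc s (neg_le_self (by positivity))
          (fun i hi => (hμ i hi).le) hIcc fun i hi j hj hij =>
            subsingleton_Icc_inter_of_disjoint_interior hC hCint hu hX hY hXY (hμ i hi) (hμ j hj)
              (ha i hi) (ha j hj) (hdisj hi hj hij)
    _ = 2 * diam K / dist X Y := by rw [dist_comm, dist_eq_norm]; ring

theorem exists_sum_le_of_mem_expFace {D : Set ℝ²} (hC : Convex ℝ C)
    (hCint : (interior C).Nonempty) (hD : Bornology.IsBounded D) (hDint : (interior D).Nonempty)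
    (hpar : ParallelTo D C) {a b : ℝ²} (hab : a ≠ b) :
    ∃ ρ : ℝ, 0 ≤ ρ ∧ ∀ n (v : Fin n → ℝ²) (μ : Fin n → ℝ) (s : Finset (Fin n)),
      (∀ i ∈ s, 0 < μ i) →
      (s : Set (Fin n)).Pairwise (fun i j => Disjoint (interior ((fun x => v i + μ i • x) '' C))
        (interior ((fun x => v j + μ j • x) '' C))) →
      (∀ i ∈ s, ∃ u ≠ 0, a ∈ expFace D u ∧ b ∈ expFace D u ∧
        expFace ((fun x => v i + μ i • x) '' C) u ⊆ expFace D u) →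
      ∑ i ∈ s, μ i ≤ ρ := by
  by_cases hside : ∃ u ≠ 0, a ∈ expFace D u ∧ b ∈ expFace D u
  · obtain ⟨u, hu, ha, hb⟩ := hside
    obtain ⟨X, hX, Y, hY, hXY⟩ := hpar u hu ⟨a, ha, b, hb, hab⟩
    refine ⟨2 * diam D / dist X Y, by positivity, fun n v μ s hμ hdisj hface =>
      sum_le_of_expFace_subset hD hC hCint hu hX hY hXY s v μ hμ hdisj fun i hi => ?_⟩
    obtain ⟨u', hu', ha', hb', hsub⟩ := hface i hi
    obtain ⟨r, hr, rfl⟩ := exists_pos_smul_eq_of_mem_expFace hDint hab hu hu' ha hb ha' hb'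
    simpa only [expFace_smul_of_pos hr] using hsub
  · refine ⟨0, le_rfl, fun n v μ s _ _ hface => (Finset.sum_eq_zero fun i hi => ?_).le⟩
    obtain ⟨u, hu, ha, hb, -⟩ := hface i hi
    exact absurd ⟨u, hu, ha, hb⟩ hside

end Homothet

theorem parallel_polygon_boundary_packing_bounded_general
    (C D : Set (EuclideanSpace ℝ (Fin 2)))
    (hCconv : Convex ℝ C) (hCint : (interior C).Nonempty)
    (V : Finset (EuclideanSpace ℝ (Fin 2))) (hD : D = convexHull ℝ (V : Set _))
    (hDint : (interior D).Nonempty)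
    (hpar : ParallelTo D C) :
    ∃ ρ : ℝ, 0 < ρ ∧ ∀ n : ℕ,
      ∀ (v : Fin n → EuclideanSpace ℝ (Fin 2)) (μ : Fin n → ℝ),
        (∀ i, 0 < μ i) →
        (∀ i, (fun x => v i + μ i • x) '' C ⊆ D) →
        (∀ i j, i ≠ j →
          Disjoint (interior ((fun x => v i + μ i • x) '' C))
                   (interior ((fun x => v j + μ j • x) '' C))) →
        (∀ i, (((fun x => v i + μ i • x) '' C) ∩ frontier D).Nonempty) →
        ∑ i, μ i ≤ ρ := by
  classical
  have hDbdd : Bornology.IsBounded D :=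
    hD ▸ (V.finite_toSet.isCompact_convexHull (𝕜 := ℝ)).isBounded
  choose ρ hρ0 hρ using fun p : V.offDiag =>
    exists_sum_le_of_mem_expFace hCconv hCint hDbdd hDint hpar (Finset.mem_offDiag.1 p.2).2.2
  refine ⟨1 + ∑ p, ρ p, add_pos_of_pos_of_nonneg one_pos (Finset.sum_nonneg fun p _ => hρ0 p), ?_⟩
  intro n v μ hμ hsub hdisj htouch
  have hside : ∀ i, ∃ p : V.offDiag, ∃ u ≠ 0, p.1.1 ∈ expFace D u ∧ p.1.2 ∈ expFace D u ∧
      expFace ((fun x => v i + μ i • x) '' C) u ⊆ expFace D u := by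
    intro i
    obtain ⟨x, hxi, hxD⟩ := htouch i
    subst hD
    obtain ⟨p, hp, u, hu, hxF, haF, hbF⟩ := exists_offDiag_mem_expFace_of_mem_frontier hDint hxD
    exact ⟨⟨p, hp⟩, u, hu, haF, hbF, expFace_subset_expFace_of_mem (hsub i) hxi hxF⟩
  choose P hP using hside
  calc ∑ i, μ i = ∑ p, ∑ i with P i = p, μ i := (Finset.sum_fiberwise _ P μ).symm
    _ ≤ ∑ p, ρ p := Finset.sum_le_sum fun p _ => hρ p n v μ _ (fun i _ => hμ i)
        (fun i _ j _ hij => hdisj i j hij) fun i hi => (Finset.mem_filter.1 hi).2 ▸ hP i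
    _ ≤ 1 + ∑ p, ρ p := le_add_of_nonneg_left zero_le_one

/-- Proposition 3: If `D` is a convex polygon parallel to the convex body
`C`, then there is `ρ > 0` (depending on `C` and `D`) such that for every packing of
positive homothets of `C` in `D`, all touching the frontier of `D`, the homothety factors
sum to at most `ρ`. -/
theorem parallel_polygon_boundary_packing_bounded
    (C D : Set (EuclideanSpace ℝ (Fin 2)))
    (hCconv : Convex ℝ C) (hCcpt : IsCompact C) (hCint : (interior C).Nonempty)
    (V : Finset (EuclideanSpace ℝ (Fin 2))) (hD : D = convexHull ℝ (V : Set _))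
    (hDint : (interior D).Nonempty)
    (hpar : ParallelTo D C) :
    ∃ ρ : ℝ, 0 < ρ ∧ ∀ n : ℕ,
      ∀ (v : Fin n → EuclideanSpace ℝ (Fin 2)) (μ : Fin n → ℝ),
        (∀ i, 0 < μ i) →
        (∀ i, (fun x => v i + μ i • x) '' C ⊆ D) →
        (∀ i j, i ≠ j →
          Disjoint (interior ((fun x => v i + μ i • x) '' C))
                   (interior ((fun x => v j + μ j • x) '' C))) →
        (∀ i, (((fun x => v i + μ i • x) '' C) ∩ frontier D).Nonempty) →
        ∑ i, μ i ≤ ρ :=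
  parallel_polygon_boundary_packing_bounded_general C D hCconv hCint V hD hDint hpar
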